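/- The map f : CH^n → C^n, f(z) = z / sqrt(1 - ||z||^2), satisfies f^*(ω_FS) = ω_0, where ω_FS = (i/2) ∂∂̄ log(1 + Σ_j |z_j|^2) is the restriction of the Fubini–Study form to the affine chart C^n ⊂ CP^n, and ω_0 is the standard symplectic form restricted to CH^n. -/

import Mathlib

/-!
Both forms are read off from the real Hessians of their potentials: that of `‖y‖²` is
`2⟪a, b⟫`, so `ω₀(v, w) = ⟪I v, w⟫`, and that of `log (1 + ‖y‖²)` is
`2⟪a, b⟫ / (1 + ‖y‖²) - 4⟪y, a⟫⟪y, b⟫ / (1 + ‖y‖²)²`. With `s = √(1 - ‖z‖²)` one has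
`df_z x = x / s + (⟪z, x⟫ / s³) z` and `1 + ‖f z‖² = 1 / s²`. Since multiplication by `I` is a
real isometry, `⟪I a, b⟫` is antisymmetric and `⟪I z, z⟫ = 0`; after substituting, the terms
along `z` cancel and the factors of `s` compensate exactly.
-/

/-- The Kähler 2-form `(i/2)∂∂̄Φ` associated to a potential `Φ`, evaluated at the
point `z` on tangent vectors `v, w`. -/
noncomputable def kform (n : ℕ) (Φ : EuclideanSpace ℂ (Fin n) → ℝ)
    (z v w : EuclideanSpace ℂ (Fin n)) : ℝ :=
  (1 / 4) * (fderiv ℝ (fderiv ℝ Φ) z (Complex.I • v) w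
    - fderiv ℝ (fderiv ℝ Φ) z v (Complex.I • w))

open scoped RealInnerProductSpace

section RealInnerProductSpace

variable {F : Type*} [NormedAddCommGroup F] [InnerProductSpace ℝ F]

-- Derivatives see `innerSL ℝ` as an `→L[ℝ]` map rather than an `→L⋆[ℝ]` one, and there
-- `innerSL_apply_apply` does not match syntactically.
theorem innerSL_real_apply_apply (a b : F) :
    DFunLike.coe (F := F →L[ℝ] F →L[ℝ] ℝ) (innerSL ℝ) a b = ⟪a, b⟫ :=
  rfl

theorem fderiv_fderiv_norm_sq_apply (z a b : F) :
    fderiv ℝ (fderiv ℝ fun y : F => ‖y‖ ^ 2) z a b = 2 * ⟪a, b⟫ := by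
  have h : fderiv ℝ (fun y : F => ‖y‖ ^ 2) = fun y => (2 • innerSL ℝ) y :=
    funext fderiv_norm_sq_apply
  rw [h, (2 • innerSL ℝ (E := F)).hasFDerivAt.fderiv]
  simp [innerSL_real_apply_apply, two_mul]

theorem hasFDerivAt_log_one_add_norm_sq (y : F) :
    HasFDerivAt (fun y : F => Real.log (1 + ‖y‖ ^ 2)) ((1 + ‖y‖ ^ 2)⁻¹ • 2 • innerSL ℝ y) y :=
  ((hasStrictFDerivAt_norm_sq y).hasFDerivAt.const_add 1).log (by positivity)

theorem fderiv_fderiv_log_one_add_norm_sq_apply (z a b : F) :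
    fderiv ℝ (fderiv ℝ fun y : F => Real.log (1 + ‖y‖ ^ 2)) z a b
      = 2 * ⟪a, b⟫ / (1 + ‖z‖ ^ 2) - 4 * ⟪z, a⟫ * ⟪z, b⟫ / (1 + ‖z‖ ^ 2) ^ 2 := by
  have hpos : (0 : ℝ) < 1 + ‖z‖ ^ 2 := by positivity
  have hinv : HasFDerivAt (fun y : F => (1 + ‖y‖ ^ 2)⁻¹)
      (-((1 + ‖z‖ ^ 2) ^ 2)⁻¹ • 2 • innerSL ℝ z) z :=
    (hasDerivAt_inv hpos.ne').comp_hasFDerivAt z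
      ((hasStrictFDerivAt_norm_sq z).hasFDerivAt.const_add 1)
  have h : fderiv ℝ (fun y : F => Real.log (1 + ‖y‖ ^ 2))
      = fun y => (1 + ‖y‖ ^ 2)⁻¹ • (2 • innerSL ℝ) y :=
    funext fun y => (hasFDerivAt_log_one_add_norm_sq y).fderiv
  have hF : HasFDerivAt (fun y => (1 + ‖y‖ ^ 2)⁻¹ • (2 • innerSL ℝ) y) _ z :=
    hinv.smul (2 • innerSL ℝ (E := F)).hasFDerivAt
  rw [h, hF.fderiv]
  simp only [neg_smul, smul_apply, add_apply, ContinuousLinearMap.smulRight_apply, neg_apply,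
    coe_innerSL_apply, nsmul_eq_mul, Nat.cast_ofNat, smul_eq_mul, innerSL_real_apply_apply]
  field_simp
  ring

theorem fderiv_inv_sqrt_one_sub_norm_sq_smul_apply {z : F} (hz : ‖z‖ < 1) (x : F) :
    fderiv ℝ (fun y : F => (√(1 - ‖y‖ ^ 2))⁻¹ • y) z x
      = (√(1 - ‖z‖ ^ 2))⁻¹ • x + (⟪z, x⟫ / √(1 - ‖z‖ ^ 2) ^ 3) • z := by
  have hu : 0 < 1 - ‖z‖ ^ 2 := by nlinarith [norm_nonneg z]
  have hs0 : 0 < √(1 - ‖z‖ ^ 2) := Real.sqrt_pos.2 hu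
  have hsqrt := ((hasStrictFDerivAt_norm_sq z).hasFDerivAt.const_sub 1).sqrt hu.ne'
  have hinv := (hasDerivAt_inv hs0.ne').comp_hasFDerivAt z hsqrt
  have hF : HasFDerivAt (fun y : F => (√(1 - ‖y‖ ^ 2))⁻¹ • y) _ z :=
    hinv.smul (hasFDerivAt_id z)
  rw [hF.fderiv]
  simp only [Function.comp_apply, one_div, mul_inv_rev, smul_neg, neg_smul, neg_neg, add_apply,
    smul_apply, ContinuousLinearMap.id_apply, ContinuousLinearMap.smulRight_apply,
    coe_innerSL_apply, nsmul_eq_mul, Nat.cast_ofNat, smul_eq_mul, add_right_inj]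
  congr 1
  ring

end RealInnerProductSpace

open Complex

section ComplexStructure

variable {E : Type*} [NormedAddCommGroup E] [InnerProductSpace ℝ E] [NormedSpace ℂ E]

theorem real_inner_I_smul_I_smul (x y : E) : ⟪I • x, I • y⟫ = ⟪x, y⟫ := by
  simp only [real_inner_eq_norm_add_mul_self_sub_norm_mul_self_sub_norm_mul_self_div_two,
    ← smul_add, norm_smul, norm_I, one_mul]

theorem real_inner_I_smul_left (x y : E) : ⟪I • x, y⟫ = -⟪x, I • y⟫ := by
  rw [← real_inner_I_smul_I_smul, smul_smul, I_mul_I, neg_one_smul, inner_neg_left]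

theorem real_inner_I_smul_right (x y : E) : ⟪x, I • y⟫ = -⟪I • x, y⟫ := by
  rw [real_inner_I_smul_left, neg_neg]

theorem real_inner_I_smul_swap (x y : E) : ⟪I • x, y⟫ = -⟪I • y, x⟫ := by
  rw [real_inner_I_smul_left, real_inner_comm]

theorem real_inner_I_smul_self_left (x : E) : ⟪I • x, x⟫ = 0 := by
  have h := real_inner_I_smul_swap x x
  linarith

end ComplexStructure

theorem kform_norm_sq {n : ℕ} (z v w : EuclideanSpace ℂ (Fin n)) :
    kform n (fun y => ‖y‖ ^ 2) z v w = ⟪I • v, w⟫ := by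
  rw [kform, fderiv_fderiv_norm_sq_apply, fderiv_fderiv_norm_sq_apply, real_inner_I_smul_right]
  ring

theorem kform_log_one_add_norm_sq {n : ℕ} (y a b : EuclideanSpace ℂ (Fin n)) :
    kform n (fun y => Real.log (1 + ‖y‖ ^ 2)) y a b
      = ⟪I • a, b⟫ / (1 + ‖y‖ ^ 2)
        - (⟪y, I • a⟫ * ⟪y, b⟫ - ⟪y, a⟫ * ⟪y, I • b⟫) / (1 + ‖y‖ ^ 2) ^ 2 := by
  rw [kform, fderiv_fderiv_log_one_add_norm_sq_apply, fderiv_fderiv_log_one_add_norm_sq_apply,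
    real_inner_I_smul_right a]
  ring

/-- The map `f : ℂHⁿ → ℂⁿ`, `f z = z / √(1 - ‖z‖²)`, satisfies `f^*(ω_FS) = ω₀`,
where `ω_FS` has potential `log(1 + ‖w‖²)` and `ω₀` has potential `‖z‖²`. -/
theorem stmt_2 (n : ℕ)
    (f : EuclideanSpace ℂ (Fin n) → EuclideanSpace ℂ (Fin n))
    (hf : ∀ z, f z = (Real.sqrt (1 - ‖z‖ ^ 2))⁻¹ • z) :
    ∀ z : EuclideanSpace ℂ (Fin n), ‖z‖ < 1 → ∀ v w,
      kform n (fun y => Real.log (1 + ‖y‖ ^ 2)) (f z) (fderiv ℝ f z v) (fderiv ℝ f z w)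
        = kform n (fun y => ‖y‖ ^ 2) z v w := by
  obtain rfl : f = fun y => (√(1 - ‖y‖ ^ 2))⁻¹ • y := funext hf
  intro z hz v w
  have hu : 0 < 1 - ‖z‖ ^ 2 := by nlinarith [norm_nonneg z]
  rw [kform_log_one_add_norm_sq, kform_norm_sq, fderiv_inv_sqrt_one_sub_norm_sq_smul_apply hz,
    fderiv_inv_sqrt_one_sub_norm_sq_smul_apply hz]
  have hs0 : 0 < √(1 - ‖z‖ ^ 2) := Real.sqrt_pos.2 hu
  have hs2 : √(1 - ‖z‖ ^ 2) ^ 2 = 1 - ‖z‖ ^ 2 := Real.sq_sqrt hu.le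
  simp only [smul_add, smul_comm I (_ : ℝ), inner_add_left, inner_add_right, real_inner_smul_left,
    real_inner_smul_right, real_inner_I_smul_right, real_inner_I_smul_self_left, norm_smul,
    real_inner_self_eq_norm_sq, norm_inv, Real.norm_of_nonneg hs0.le, mul_pow]
  rw [real_inner_I_smul_swap v z]
  set s := √(1 - ‖z‖ ^ 2)
  rw [show ‖z‖ ^ 2 = 1 - s ^ 2 by linarith]
  field_simp
  ring
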